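/- arXiv:math/0307079 — 4 statements merged into one kernel-verified Lean document; each statement's English description precedes it below -/
import Mathlib

section
/- Let A be a unital C*-algebra, C a C*-subalgebra of the center of A, J a closed ideal of C, and X a closed subspace of A that is a C-submodule (JX ⊆ X). Then for every x ∈ X, the distance from x to the closed linear span of JA equals the distance from x to the closed linear span of JX. -/
/-!
For `y = ∑ cᵢ jᵢ aᵢ` in the span of `JA`, put `h = ∑ jᵢ* jᵢ ∈ J` and `e = (h + δ)⁻¹ h`. Since `C`
is central, `jᵢ jᵢ* = jᵢ* jᵢ ≤ h`, hence `‖(1 - e) jᵢ‖² ≤ ‖(1 - e) h (1 - e)‖ ≤ δ`, while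
`‖1 - e‖ ≤ 1`. So `‖x - e x‖ ≤ ‖(1 - e)(x - y)‖ + ‖(1 - e) y‖ ≤ ‖x - y‖ + O(√δ)`, and `e x` lies in
`[JX]` because `(h + δ)⁻¹` is a limit of elements of `C`, and `h ∈ J`.
-/

open Set Metric

section
variable {A : Type*} [CStarAlgebra A] [PartialOrder A] [StarOrderedRing A]

lemma norm_cfc_mul_sq_le (f : ℝ → ℝ) {h j : A} (hj : j * star j ≤ h)
    (hf : ContinuousOn f (spectrum ℝ h) := by cfc_cont_tac) (hh : IsSelfAdjoint h := by cfc_tac) :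
    ‖cfc f h * j‖ ^ 2 ≤ ‖cfc (fun t => f t * t * f t) h‖ := by
  have hsa : IsSelfAdjoint (cfc f h) := cfc_predicate f h
  have hconj : cfc f h * (j * star j) * cfc f h ≤ cfc f h * h * cfc f h :=
    hsa.conjugate_le_conjugate hj
  calc ‖cfc f h * j‖ ^ 2 = ‖cfc f h * (j * star j) * cfc f h‖ := by
        rw [sq, ← CStarRing.norm_self_mul_star, star_mul, hsa.star_eq]; noncomm_ring
    _ ≤ ‖cfc f h * h * cfc f h‖ := CStarAlgebra.norm_le_norm_of_nonneg_of_le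
        (hsa.conjugate_nonneg (mul_star_self_nonneg j)) hconj
    _ = ‖cfc (fun t => f t * t * f t) h‖ := by
        rw [cfc_mul _ f h, cfc_mul f (fun t => t) h, cfc_id' ℝ h]

variable {h : A} (hh : 0 ≤ h) {δ : ℝ} (hδ : 0 < δ)
include hh hδ

lemma continuousOn_inv_add_spectrum : ContinuousOn (fun t : ℝ => (t + δ)⁻¹) (spectrum ℝ h) :=
  (continuousOn_id.add continuousOn_const).inv₀ fun _ ht =>
    (add_pos_of_nonneg_of_pos (spectrum_nonneg_of_nonneg hh ht) hδ).ne'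

lemma one_sub_cfc_inv_add_mul :
    1 - cfc (fun t : ℝ => (t + δ)⁻¹ * t) h = cfc (fun t : ℝ => δ * (t + δ)⁻¹) h := by
  have := continuousOn_inv_add_spectrum hh hδ
  rw [← cfc_const_one ℝ h, ← cfc_sub _ _ h]
  refine cfc_congr fun t ht => ?_
  have : t + δ ≠ 0 := (add_pos_of_nonneg_of_pos (spectrum_nonneg_of_nonneg hh ht) hδ).ne'
  field_simp
  ring

lemma norm_one_sub_cfc_inv_add_mul_le_one : ‖1 - cfc (fun t : ℝ => (t + δ)⁻¹ * t) h‖ ≤ 1 := by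
  rw [one_sub_cfc_inv_add_mul hh hδ]
  refine norm_cfc_le zero_le_one fun t ht => ?_
  have ht0 := spectrum_nonneg_of_nonneg hh ht
  rw [Real.norm_of_nonneg (by positivity), ← div_eq_mul_inv, div_le_one (by positivity)]
  linarith

lemma norm_one_sub_cfc_inv_add_mul_mul_le {j : A} (hj : j * star j ≤ h) :
    ‖(1 - cfc (fun t : ℝ => (t + δ)⁻¹ * t) h) * j‖ ≤ √δ := by
  have := continuousOn_inv_add_spectrum hh hδ
  rw [one_sub_cfc_inv_add_mul hh hδ, Real.le_sqrt (norm_nonneg _) hδ.le]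
  refine (norm_cfc_mul_sq_le _ hj).trans (norm_cfc_le hδ.le fun t ht => ?_)
  have ht0 := spectrum_nonneg_of_nonneg hh ht
  rw [Real.norm_of_nonneg (by positivity)]
  field_simp
  nlinarith [sq_nonneg t, mul_nonneg ht0 hδ.le]

end

lemma cfc_mem_closure_of_mem {A : Type*} [CStarAlgebra A] {S : StarSubalgebra ℂ A} {h : A}
    (hh : h ∈ S) (f : ℝ → ℝ) : cfc f h ∈ closure (S : Set A) := by
  have hle : StarAlgebra.elemental ℝ h ≤ ((S.subtype.restrictScalars ℝ).range).topologicalClosure :=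
    StarAlgebra.elemental.le_of_mem (StarSubalgebra.isClosed_topologicalClosure _)
      (StarSubalgebra.le_topologicalClosure _ ⟨⟨h, hh⟩, rfl⟩)
  have := hle (cfc_mem_elemental f h)
  rw [← SetLike.mem_coe, StarSubalgebra.topologicalClosure_coe] at this
  convert this using 2
  ext a
  exact ⟨fun ha => ⟨⟨a, ha⟩, rfl⟩, by rintro ⟨b, rfl⟩; exact b.2⟩

lemma exists_mem_closure_norm_one_sub_mul_le {A : Type*} [CStarAlgebra A]
    {C : StarSubalgebra ℂ A} (hC : (C : Set A) ⊆ center A) (J : Ideal C) {ι : Type*} [Fintype ι]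
    {j : ι → C} (hj : ∀ i, j i ∈ J) {η : ℝ} (hη : 0 < η) :
    ∃ e ∈ closure (((↑) : C → A) '' J), ‖1 - e‖ ≤ 1 ∧ ∀ i, ‖(1 - e) * j i‖ ≤ η := by
  let := CStarAlgebra.spectralOrder A
  have := CStarAlgebra.spectralOrderedRing A
  set h : C := ∑ i, star (j i) * j i with h_def
  have hhJ : h ∈ J := J.sum_mem fun i _ => J.mul_mem_left _ (hj i)
  have hh : 0 ≤ (h : A) := by
    rw [h_def]; push_cast
    exact Finset.sum_nonneg fun i _ => star_mul_self_nonneg _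
  have hjh : ∀ i, (j i : A) * star (j i : A) ≤ h := fun i => by
    rw [(Set.mem_center_iff.mp (hC (j i).2)).comm, h_def]; push_cast
    exact Finset.single_le_sum (f := fun i => star (j i : A) * j i)
      (fun i _ => star_mul_self_nonneg _) (Finset.mem_univ i)
  have hδ : 0 < η ^ 2 := by positivity
  refine ⟨cfc (fun t : ℝ => (t + η ^ 2)⁻¹ * t) (h : A), ?_,
    norm_one_sub_cfc_inv_add_mul_le_one hh hδ, fun i => ?_⟩
  · rw [cfc_mul _ (fun t => t) (h : A) (continuousOn_inv_add_spectrum hh hδ) continuousOn_id,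
      cfc_id' ℝ (h : A) hh.isSelfAdjoint]
    exact map_mem_closure (f := (· * (h : A))) (continuous_mul_const _)
      (cfc_mem_closure_of_mem h.2 _) fun a ha => ⟨⟨a, ha⟩ * h, J.mul_mem_left _ hhJ, rfl⟩
  · simpa [Real.sqrt_sq hη.le] using norm_one_sub_cfc_inv_add_mul_mul_le hh hδ (hjh i)

lemma exists_mem_closure_norm_one_sub_mul_le_of_mem_span {A : Type*} [CStarAlgebra A]
    {C : StarSubalgebra ℂ A} (hC : (C : Set A) ⊆ center A) (J : Ideal C) {y : A}
    (hy : y ∈ Submodule.span ℂ {y : A | ∃ j : C, j ∈ J ∧ ∃ a : A, y = j * a}) {η : ℝ}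
    (hη : 0 < η) :
    ∃ e ∈ closure (((↑) : C → A) '' J), ‖1 - e‖ ≤ 1 ∧ ‖(1 - e) * y‖ ≤ η := by
  obtain ⟨n, c, v, rfl⟩ := Submodule.mem_span_set'.mp hy
  choose j hj a hva using fun i => (v i).2
  set M := ∑ i, ‖c i‖ * ‖a i‖
  have hM : 0 ≤ M := by positivity
  obtain ⟨e, he, he1, hej⟩ :=
    exists_mem_closure_norm_one_sub_mul_le hC J hj (η := η / (M + 1)) (by positivity)
  refine ⟨e, he, he1, ?_⟩
  calc ‖(1 - e) * ∑ i, c i • (v i : A)‖ = ‖∑ i, c i • ((1 - e) * j i * a i)‖ := by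
        simp only [Finset.mul_sum, mul_smul_comm, hva, mul_assoc]
    _ ≤ ∑ i, ‖c i‖ * (η / (M + 1) * ‖a i‖) := norm_sum_le_of_le _ fun i _ => by
        rw [norm_smul]
        gcongr
        exact (norm_mul_le _ _).trans (by gcongr; exact hej i)
    _ = η / (M + 1) * M := by
        rw [Finset.mul_sum]
        exact Finset.sum_congr rfl fun i _ => by ring
    _ ≤ η := by
        rw [div_mul_eq_mul_div, div_le_iff₀ (by positivity)]
        nlinarith

lemma infDist_le_infDist_of_approxUnit {A : Type*} [NormedRing A] {E S T : Set A} {x : A}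
    (hS : S.Nonempty) (hET : ∀ e ∈ E, e * x ∈ T)
    (hE : ∀ y ∈ S, ∀ η > 0, ∃ e ∈ E, ‖1 - e‖ ≤ 1 ∧ ‖(1 - e) * y‖ ≤ η) :
    infDist x T ≤ infDist x S := by
  refine (le_infDist hS).2 fun y hy => le_of_forall_pos_le_add fun η hη => ?_
  obtain ⟨e, he, he1, hey⟩ := hE y hy η hη
  calc infDist x T ≤ dist x (e * x) := infDist_le_dist_of_mem (hET e he)
    _ = ‖(1 - e) * (x - y) + (1 - e) * y‖ := by rw [dist_eq_norm]; congr 1; noncomm_ring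
    _ ≤ ‖1 - e‖ * ‖x - y‖ + η := (norm_add_le _ _).trans (add_le_add (norm_mul_le _ _) hey)
    _ ≤ dist x y + η := by
        rw [dist_eq_norm]
        gcongr
        exact mul_le_of_le_one_left (norm_nonneg _) he1

theorem stmt_1_general {A : Type*} [NormedRing A] [StarRing A] [CStarRing A]
    [NormedAlgebra ℂ A] [CompleteSpace A] [StarModule ℂ A]
    (C : StarSubalgebra ℂ A) (hC : (C : Set A) ⊆ Set.center A)
    (J : Ideal ↥C)
    (X : Submodule ℂ A)
    (x : A) (hx : x ∈ X) :
    Metric.infDist x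
        (closure (Submodule.span ℂ {y : A | ∃ j : ↥C, j ∈ J ∧ ∃ a : A, y = (j : A) * a} : Set A)) =
      Metric.infDist x
        (closure
          (Submodule.span ℂ {y : A | ∃ j : ↥C, j ∈ J ∧ ∃ a ∈ X, y = (j : A) * a} : Set A)) := by
  let : CStarAlgebra A := {}
  refine le_antisymm (infDist_le_infDist_of_subset ?_ ⟨0, subset_closure (zero_mem _)⟩) ?_
  · exact closure_mono (Submodule.span_mono fun y ⟨j, hj, a, _, hy⟩ => ⟨j, hj, a, hy⟩)
  refine (infDist_le_infDist_of_approxUnit ⟨0, zero_mem _⟩ (fun e he => ?_)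
    fun y hy η hη => exists_mem_closure_norm_one_sub_mul_le_of_mem_span hC J hy hη).trans_eq
    infDist_closure.symm
  exact map_mem_closure (f := (· * x)) (continuous_mul_const x) he
    fun _ ⟨j, hj, hjx⟩ => Submodule.subset_span ⟨j, hj, x, hx, by rw [← hjx]⟩

/-- Let `A` be a unital C*-algebra, `C` a C*-subalgebra of the center of `A`,
`J` a closed ideal of `C`, and `X` a closed subspace of `A` which is a `C`-submodule.  Then
for every `x ∈ X`, the distance from `x` to the closed linear span `[JA]` equals the distance
from `x` to the closed linear span `[JX]`. -/
theorem stmt_1 {A : Type*} [NormedRing A] [StarRing A] [CStarRing A]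
    [NormedAlgebra ℂ A] [CompleteSpace A] [StarModule ℂ A]
    (C : StarSubalgebra ℂ A) (hC : (C : Set A) ⊆ Set.center A)
    (J : Ideal ↥C) (hJclosed : IsClosed (J : Set ↥C))
    (X : Submodule ℂ A) (hXclosed : IsClosed (X : Set A))
    (hmod : ∀ c : ↥C, ∀ x ∈ X, (c : A) * x ∈ X)
    (x : A) (hx : x ∈ X) :
    Metric.infDist x
        (closure (Submodule.span ℂ {y : A | ∃ j : ↥C, j ∈ J ∧ ∃ a : A, y = (j : A) * a} : Set A)) =
      Metric.infDist x
        (closure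
          (Submodule.span ℂ {y : A | ∃ j : ↥C, j ∈ J ∧ ∃ a ∈ X, y = (j : A) * a} : Set A)) :=
  stmt_1_general C hC J X x hx
end

section
/- Let Δ be a compact Hausdorff space, f : Δ → ℝ a bounded function, and suppose (Δ_j)_{j∈ℕ} is an increasing sequence of clopen subsets of Δ whose union is dense in Δ. If there is a continuous function g on Δ with { t : f(t) ≠ g(t) } meager, then ess-sup_{t∈Δ} f(t) = lim_j ess-sup_{t∈Δ_j} f(t), where ess-sup over Δ_j means inf { c : { t∈Δ_j : f(t) > c } is meager }. -/
open Filter Topology Set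

lemma isMeagre_union' {X : Type*} [TopologicalSpace X] {s t : Set X}
    (hs : IsMeagre s) (ht : IsMeagre t) : IsMeagre (s ∪ t) := by
  rw [IsMeagre, compl_union]
  exact Filter.inter_mem hs ht

lemma isOpen_empty_of_isMeagre {X : Type*} [TopologicalSpace X] [BaireSpace X]
    {U : Set X} (hU : IsOpen U) (h : IsMeagre U) : U = ∅ := by
  have hd : Dense Uᶜ := dense_of_mem_residual h
  have : interior U = ∅ := interior_eq_empty_iff_dense_compl.2 hd
  rwa [hU.interior_eq] at this

lemma key_set_eq {Δ : Type*} [TopologicalSpace Δ] [CompactSpace Δ] [T2Space Δ]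
    (f g : Δ → ℝ) (hg : Continuous g) (hmeager : IsMeagre {t | f t ≠ g t})
    (s : Set Δ) (hs : IsOpen s) :
    {c : ℝ | IsMeagre {t | t ∈ s ∧ c < f t}} = {c : ℝ | ∀ t ∈ s, g t ≤ c} := by
  ext c
  simp only [mem_setOf_eq]
  constructor
  · intro h t hts
    by_contra hc
    push_neg at hc
    have hsub : {t | t ∈ s ∧ c < g t} ⊆ {t | t ∈ s ∧ c < f t} ∪ {t | f t ≠ g t} := by
      intro x ⟨hxs, hxg⟩
      by_cases hfg : f x = g x
      · exact Or.inl ⟨hxs, by rwa [hfg]⟩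
      · exact Or.inr hfg
    have hm : IsMeagre {t | t ∈ s ∧ c < g t} :=
      (isMeagre_union' h hmeager).mono hsub
    have hopen : IsOpen {t | t ∈ s ∧ c < g t} := by
      have : {t | t ∈ s ∧ c < g t} = s ∩ g ⁻¹' (Ioi c) := rfl
      rw [this]
      exact hs.inter (isOpen_Ioi.preimage hg)
    have := isOpen_empty_of_isMeagre hopen hm
    exact absurd this (Nonempty.ne_empty ⟨t, hts, hc⟩)
  · intro h
    apply hmeager.mono
    intro x ⟨hxs, hxf⟩
    intro hfg
    exact absurd (h x hxs) (not_le.2 (hfg ▸ hxf))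

/-- Let `Δ` be compact Hausdorff, `f : Δ → ℝ` bounded, `(Δ_j)` an increasing
sequence of clopen subsets with dense union, and suppose there is a continuous `g` with
`{t | f t ≠ g t}` meager.  Then the essential supremum of `f` over `Δ` is the limit of the
essential suprema of `f` over the `Δ_j`. -/
theorem stmt_5 {Δ : Type*} [TopologicalSpace Δ] [CompactSpace Δ] [T2Space Δ] [Nonempty Δ]
    (f g : Δ → ℝ) (hbdd : ∃ M, ∀ t, |f t| ≤ M) (hg : Continuous g)
    (hmeager : IsMeagre {t | f t ≠ g t})
    (D : ℕ → Set Δ) (hclopen : ∀ j, IsClopen (D j)) (hmono : Monotone D)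
    (hdense : Dense (⋃ j, D j)) :
    Tendsto (fun j => sInf {c : ℝ | IsMeagre {t | t ∈ D j ∧ c < f t}}) atTop
      (𝓝 (sInf {c : ℝ | IsMeagre {t | c < f t}})) := by
  have hbddg : BddAbove (range g) := (isCompact_range hg).bddAbove
  have hneg : (range g).Nonempty := range_nonempty g
  -- the global essential sup is sSup (range g)
  have hglob : sInf {c : ℝ | IsMeagre {t | c < f t}} = sSup (range g) := by
    have h1 : {c : ℝ | IsMeagre {t | c < f t}}
        = {c : ℝ | ∀ t ∈ (univ : Set Δ), g t ≤ c} := by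
      have := key_set_eq f g hg hmeager univ isOpen_univ
      simpa using this
    rw [h1]
    have h2 : {c : ℝ | ∀ t ∈ (univ : Set Δ), g t ≤ c} = Ici (sSup (range g)) := by
      ext c
      simp only [mem_setOf_eq, mem_Ici, mem_univ, forall_true_left]
      rw [csSup_le_iff hbddg hneg]
      simp [forall_mem_range]
    rw [h2, csInf_Ici]
  rw [hglob]
  -- the local essential sups
  have hloc : ∀ j, (D j).Nonempty →
      sInf {c : ℝ | IsMeagre {t | t ∈ D j ∧ c < f t}} = sSup (g '' D j) := by
    intro j hj
    rw [key_set_eq f g hg hmeager (D j) (hclopen j).isOpen]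
    have h2 : {c : ℝ | ∀ t ∈ D j, g t ≤ c} = Ici (sSup (g '' D j)) := by
      ext c
      simp only [mem_setOf_eq, mem_Ici]
      rw [csSup_le_iff (hbddg.mono (image_subset_range g (D j))) (hj.image g)]
      simp [forall_mem_image]
    rw [h2, csInf_Ici]
  -- find j0 with D j0 nonempty
  obtain ⟨t0, ht0⟩ := hdense.nonempty
  obtain ⟨j0, hj0⟩ := mem_iUnion.1 ht0
  have hne : ∀ j ≥ j0, (D j).Nonempty := fun j hj => ⟨t0, hmono hj hj0⟩
  rw [Metric.tendsto_atTop]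
  intro ε hε
  -- find a point where g is close to its sup, inside some D j1
  obtain ⟨y, ⟨t1, rfl⟩, hy⟩ := exists_lt_of_lt_csSup hneg
    (by linarith : sSup (range g) - ε < sSup (range g))
  have hU : IsOpen {t | sSup (range g) - ε < g t} := isOpen_Ioi.preimage hg
  obtain ⟨t2, ht2D, ht2U⟩ := hdense.exists_mem_open hU ⟨t1, hy⟩
  obtain ⟨j1, hj1⟩ := mem_iUnion.1 ht2D
  refine ⟨max j0 j1, fun j hj => ?_⟩
  have hj0' : j0 ≤ j := le_trans (le_max_left _ _) hj
  have hj1' : j1 ≤ j := le_trans (le_max_right _ _) hj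
  rw [hloc j (hne j hj0')]
  have hle : sSup (g '' D j) ≤ sSup (range g) :=
    csSup_le_csSup hbddg ((hne j hj0').image g) (image_subset_range g (D j))
  have hgt : sSup (range g) - ε < sSup (g '' D j) :=
    lt_of_lt_of_le ht2U (le_csSup (hbddg.mono (image_subset_range g (D j)))
      ⟨t2, hmono hj1' hj1, rfl⟩)
  rw [Real.dist_eq, abs_sub_lt_iff]
  constructor <;> linarith
end

section
/- Let X be a Banach space with a contractive action of a monoid of 'projections' P (idempotent contractions commuting with each other), Y ⊆ X a closed subspace, and suppose X has the property that for any sequence of mutually orthogonal projections q_j (q_i q_j = 0 for i ≠ j, Σ q_j = 1 strongly) and any bounded sequence (y_j) in Y with q_j y_j = y_j, the sum Σ q_j y_j converges in X and lies in Y, and moreover ‖Σ_j q_j z_j‖ = sup_j ‖q_j z_j‖ for such orthogonal decompositions. If p_j ∈ P is a sequence of projections increasing to 1 (with q_0 = p_0, q_j = p_j − p_{j−1} orthogonal), then for every coset x̄ ∈ X/Y and every M > ‖p_j x̄‖ for all j, one has ‖x̄‖ ≤ M. In particular lim_j ‖p_j x̄‖ = ‖x̄‖ on the quotient X/Y. 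-/
open Filter Topology Set

set_option synthInstance.maxHeartbeats 1000000
set_option maxHeartbeats 2000000

/-- The orthogonal differences `q_0 = p_0`, `q_j = p_j - p_{j-1}` of an increasing sequence of
projections `p_j`. -/
noncomputable def qOf {X : Type*} [NormedAddCommGroup X] [NormedSpace ℝ X]
    (p : ℕ → X →L[ℝ] X) : ℕ → X →L[ℝ] X
  | 0 => p 0
  | (j + 1) => p (j + 1) - p j

/-- Let `X` be a Banach space with a commuting family of idempotent contractions
`p_j` increasing to `1`, and `Y ⊆ X` a closed subspace invariant under them.  Assume, with
`q_0 = p_0`, `q_j = p_j - p_{j-1}` mutually orthogonal and `Σ q_j = 1` strongly, that `Y` is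
"strong": every bounded sequence `(y_j)` in `Y` with `q_j y_j = y_j` has `Σ y_j` convergent
in `X` with sum in `Y`, and that `‖Σ_j q_j z_j‖ = sup_j ‖q_j z_j‖` for bounded orthogonally
supported families.  Then for every coset `x̄ ∈ X/Y` and every `M` with `M > ‖p_j x̄‖` for all
`j`, one has `‖x̄‖ ≤ M`; in particular `lim_j ‖p_j x̄‖ = ‖x̄‖` in the quotient `X/Y`. -/
theorem stmt_7 {X : Type*} [NormedAddCommGroup X] [NormedSpace ℝ X] [CompleteSpace X]
    (Y : Submodule ℝ X) (hYclosed : IsClosed (Y : Set X))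
    (p : ℕ → X →L[ℝ] X)
    (hcontr : ∀ j, ‖p j‖ ≤ 1)
    (hidem : ∀ j, (p j).comp (p j) = p j)
    (hcomm : ∀ i j, (p i).comp (p j) = (p j).comp (p i))
    (hmono : ∀ i j, i ≤ j → (p i).comp (p j) = p i)
    (hYinv : ∀ j, ∀ y ∈ Y, p j y ∈ Y)
    (horth : ∀ i j, i ≠ j → (qOf p i).comp (qOf p j) = 0)
    (hsum : ∀ x : X, HasSum (fun j => qOf p j x) x)
    (hstrong : ∀ y : ℕ → X, (∀ j, y j ∈ Y) → (∃ M, ∀ j, ‖y j‖ ≤ M) →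
      (∀ j, qOf p j (y j) = y j) → ∃ s, HasSum y s ∧ s ∈ Y)
    (hnorm : ∀ z : ℕ → X, (∃ M, ∀ j, ‖qOf p j (z j)‖ ≤ M) →
      ∀ s, HasSum (fun j => qOf p j (z j)) s → ‖s‖ = ⨆ j, ‖qOf p j (z j)‖) :
    (∀ (x : X) (M : ℝ),
        (∀ j, ‖(Submodule.Quotient.mk (p j x) : X ⧸ Y)‖ < M) →
        ‖(Submodule.Quotient.mk x : X ⧸ Y)‖ ≤ M) ∧
      (∀ x : X,
        Tendsto (fun j => ‖(Submodule.Quotient.mk (p j x) : X ⧸ Y)‖) atTop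
          (𝓝 ‖(Submodule.Quotient.mk x : X ⧸ Y)‖)) := by
  -- crude bound ‖q_j u‖ ≤ 2‖u‖
  have hq2 : ∀ j (u : X), ‖qOf p j u‖ ≤ 2 * ‖u‖ := by
    intro j u
    cases j with
    | zero =>
        calc ‖qOf p 0 u‖ = ‖p 0 u‖ := rfl
          _ ≤ ‖p 0‖ * ‖u‖ := (p 0).le_opNorm u
          _ ≤ 1 * ‖u‖ := by
              exact mul_le_mul_of_nonneg_right (hcontr 0) (norm_nonneg u)
          _ ≤ 2 * ‖u‖ := by nlinarith [norm_nonneg u]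
    | succ j =>
        have : qOf p (j + 1) u = p (j + 1) u - p j u := rfl
        rw [this]
        have h1 : ‖p (j + 1) u‖ ≤ 1 * ‖u‖ :=
          ((p (j + 1)).le_opNorm u).trans
            (mul_le_mul_of_nonneg_right (hcontr (j + 1)) (norm_nonneg u))
        have h2 : ‖p j u‖ ≤ 1 * ‖u‖ :=
          ((p j).le_opNorm u).trans
            (mul_le_mul_of_nonneg_right (hcontr j) (norm_nonneg u))
        calc ‖p (j + 1) u - p j u‖ ≤ ‖p (j + 1) u‖ + ‖p j u‖ := norm_sub_le _ _
          _ ≤ 2 * ‖u‖ := by linarith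
  -- each q_j is a contraction, via hnorm applied to the constant family
  have hq1 : ∀ j (u : X), ‖qOf p j u‖ ≤ ‖u‖ := by
    intro j u
    have h := hnorm (fun _ => u) ⟨2 * ‖u‖, fun k => hq2 k u⟩ u (hsum u)
    have hbdd : BddAbove (Set.range fun k => ‖qOf p k u‖) :=
      ⟨2 * ‖u‖, by rintro r ⟨k, rfl⟩; exact hq2 k u⟩
    calc ‖qOf p j u‖ ≤ ⨆ k, ‖qOf p k u‖ := le_ciSup hbdd j
      _ = ‖u‖ := h.symm
  -- q_j p_j = q_j (pointwise)
  have hqp : ∀ j (u : X), qOf p j (p j u) = qOf p j u := by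
    intro j u
    cases j with
    | zero =>
        show p 0 (p 0 u) = p 0 u
        exact DFunLike.congr_fun (hidem 0) u
    | succ j =>
        show (p (j + 1) - p j) (p (j + 1) u) = (p (j + 1) - p j) u
        have h1 : p (j + 1) (p (j + 1) u) = p (j + 1) u :=
          DFunLike.congr_fun (hidem (j + 1)) u
        have h2 : p j (p (j + 1) u) = p j u :=
          DFunLike.congr_fun (hmono j (j + 1) (Nat.le_succ j)) u
        simp only [ContinuousLinearMap.sub_apply, h1, h2]
  -- q_j idempotent (pointwise)
  have hqq : ∀ j (u : X), qOf p j (qOf p j u) = qOf p j u := by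
    intro j u
    cases j with
    | zero =>
        show p 0 (p 0 u) = p 0 u
        exact DFunLike.congr_fun (hidem 0) u
    | succ j =>
        show (p (j + 1) - p j) ((p (j + 1) - p j) u) = (p (j + 1) - p j) u
        have h1 : p (j + 1) (p (j + 1) u) = p (j + 1) u :=
          DFunLike.congr_fun (hidem (j + 1)) u
        have h2 : p j (p j u) = p j u := DFunLike.congr_fun (hidem j) u
        have h3 : p j (p (j + 1) u) = p j u :=
          DFunLike.congr_fun (hmono j (j + 1) (Nat.le_succ j)) u
        have h4 : p (j + 1) (p j u) = p j u := by
          have := DFunLike.congr_fun (hcomm j (j + 1)) u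
          simp only [ContinuousLinearMap.comp_apply] at this
          rw [← this, h3]
        simp only [ContinuousLinearMap.sub_apply, map_sub, h1, h2, h3, h4]
        abel
  -- Y is invariant under each q_j
  have hYq : ∀ j, ∀ y ∈ Y, qOf p j y ∈ Y := by
    intro j y hy
    cases j with
    | zero => exact hYinv 0 y hy
    | succ j =>
        show p (j + 1) y - p j y ∈ Y
        exact Y.sub_mem (hYinv (j + 1) y hy) (hYinv j y hy)
  -- Part 1
  have part1 : ∀ (x : X) (M : ℝ),
      (∀ j, ‖(Submodule.Quotient.mk (p j x) : X ⧸ Y)‖ < M) →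
      ‖(Submodule.Quotient.mk x : X ⧸ Y)‖ ≤ M := by
    intro x M hM
    -- choose good representatives m_j of mk (p j x) with ‖m_j‖ < M
    have hrep : ∀ j, ∃ m : X, (Submodule.Quotient.mk m : X ⧸ Y)
        = Submodule.Quotient.mk (p j x) ∧ ‖m‖ < M := by
      intro j
      have hε : (0:ℝ) < M - ‖(Submodule.Quotient.mk (p j x) : X ⧸ Y)‖ :=
        sub_pos.mpr (hM j)
      obtain ⟨m, hm1, hm2⟩ :=
        Submodule.Quotient.norm_mk_lt (Submodule.Quotient.mk (p j x) : X ⧸ Y) hε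
      exact ⟨m, hm1, by linarith⟩
    choose m hm1 hm2 using hrep
    -- w_j := p_j x - m_j ∈ Y
    set w : ℕ → X := fun j => p j x - m j with hw
    have hwY : ∀ j, w j ∈ Y := by
      intro j
      exact (Submodule.Quotient.eq Y).mp (hm1 j).symm
    -- y_j := q_j w_j
    set y : ℕ → X := fun j => qOf p j (w j) with hy
    have hyY : ∀ j, y j ∈ Y := fun j => hYq j (w j) (hwY j)
    have hyfix : ∀ j, qOf p j (y j) = y j := fun j => hqq j (w j)
    have hybdd : ∃ C, ∀ j, ‖y j‖ ≤ C := by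
      refine ⟨M + ‖x‖, fun j => ?_⟩
      have : y j = qOf p j x - qOf p j (m j) := by
        show qOf p j (p j x - m j) = _
        rw [map_sub, hqp]
      rw [this]
      have h1 : ‖qOf p j x‖ ≤ ‖x‖ := hq1 j x
      have h2 : ‖qOf p j (m j)‖ ≤ ‖m j‖ := hq1 j (m j)
      calc ‖qOf p j x - qOf p j (m j)‖ ≤ ‖qOf p j x‖ + ‖qOf p j (m j)‖ :=
            norm_sub_le _ _
        _ ≤ ‖x‖ + ‖m j‖ := add_le_add h1 h2
        _ ≤ M + ‖x‖ := by linarith [le_of_lt (hm2 j)]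
    obtain ⟨s, hssum, hsY⟩ := hstrong y hyY hybdd hyfix
    -- x - s = Σ q_j (x - w_j)
    have hdiff : HasSum (fun j => qOf p j (x - w j)) (x - s) := by
      have : (fun j => qOf p j (x - w j)) = fun j => qOf p j x - y j := by
        funext j; rw [map_sub]
      rw [this]
      exact (hsum x).sub hssum
    -- each term is q_j m_j, of norm < M
    have hterm : ∀ j, qOf p j (x - w j) = qOf p j (m j) := by
      intro j
      rw [map_sub, ← hqp j x, ← map_sub]
      congr 1
      show p j x - w j = m j
      simp [hw]
    have hbound : ∀ j, ‖qOf p j (x - w j)‖ ≤ M := by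
      intro j
      rw [hterm j]
      exact (hq1 j (m j)).trans (le_of_lt (hm2 j))
    have hM0 : (0:ℝ) ≤ M := le_trans (norm_nonneg _) (le_of_lt (hM 0))
    have hns : ‖x - s‖ ≤ M := by
      have h := hnorm (fun j => x - w j) ⟨M, hbound⟩ (x - s) hdiff
      rw [h]
      exact ciSup_le hbound
    have hmk : (Submodule.Quotient.mk x : X ⧸ Y) = Submodule.Quotient.mk (x - s) :=
      ((Submodule.Quotient.eq Y).mpr (by simpa using hsY)).symm
    rw [hmk]
    exact (Submodule.Quotient.norm_mk_le _ _).trans hns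
  refine ⟨part1, ?_⟩
  -- contractivity of the quotient seminorm under the p_j's
  have hle : ∀ (j : ℕ) (u : X),
      ‖(Submodule.Quotient.mk (p j u) : X ⧸ Y)‖
        ≤ ‖(Submodule.Quotient.mk u : X ⧸ Y)‖ := by
    intro j u
    refine le_of_forall_pos_le_add fun ε hε => ?_
    obtain ⟨m, hm1, hm2⟩ :=
      Submodule.Quotient.norm_mk_lt (Submodule.Quotient.mk u : X ⧸ Y) hε
    have humY : u - m ∈ Y := (Submodule.Quotient.eq Y).mp hm1.symm
    have hpe : (Submodule.Quotient.mk (p j u) : X ⧸ Y) = Submodule.Quotient.mk (p j m) := by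
      refine (Submodule.Quotient.eq Y).mpr ?_
      have : p j u - p j m = p j (u - m) := by rw [map_sub]
      rw [this]
      exact hYinv j _ humY
    rw [hpe]
    have h1 : ‖p j m‖ ≤ ‖m‖ :=
      ((p j).le_opNorm m).trans (by nlinarith [norm_nonneg m, hcontr j])
    calc ‖(Submodule.Quotient.mk (p j m) : X ⧸ Y)‖ ≤ ‖p j m‖ :=
          Submodule.Quotient.norm_mk_le _ _
      _ ≤ ‖m‖ := h1
      _ ≤ ‖(Submodule.Quotient.mk u : X ⧸ Y)‖ + ε := le_of_lt hm2
  intro x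
  set f : ℕ → ℝ := fun j => ‖(Submodule.Quotient.mk (p j x) : X ⧸ Y)‖ with hf
  have hfmono : Monotone f := by
    intro i j hij
    have hpi : p i x = p i (p j x) := (DFunLike.congr_fun (hmono i j hij) x).symm
    show ‖(Submodule.Quotient.mk (p i x) : X ⧸ Y)‖ ≤ _
    rw [hpi]
    exact hle i (p j x)
  have hfbdd : ∀ j, f j ≤ ‖(Submodule.Quotient.mk x : X ⧸ Y)‖ := fun j => hle j x
  have hbdd : BddAbove (Set.range f) :=
    ⟨‖(Submodule.Quotient.mk x : X ⧸ Y)‖, by rintro r ⟨j, rfl⟩; exact hfbdd j⟩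
  have htend : Tendsto f atTop (𝓝 (⨆ j, f j)) := tendsto_atTop_ciSup hfmono hbdd
  have hL1 : (⨆ j, f j) ≤ ‖(Submodule.Quotient.mk x : X ⧸ Y)‖ := ciSup_le hfbdd
  have hL2 : ‖(Submodule.Quotient.mk x : X ⧸ Y)‖ ≤ ⨆ j, f j := by
    refine le_of_forall_pos_le_add fun ε hε => ?_
    refine part1 x ((⨆ j, f j) + ε) fun j => ?_
    have : f j ≤ ⨆ k, f k := le_ciSup hbdd j
    calc ‖(Submodule.Quotient.mk (p j x) : X ⧸ Y)‖ = f j := rfl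
      _ ≤ ⨆ k, f k := this
      _ < (⨆ k, f k) + ε := lt_add_of_pos_right _ hε
  have hLeq : (⨆ j, f j) = ‖(Submodule.Quotient.mk x : X ⧸ Y)‖ := le_antisymm hL1 hL2
  rw [← hLeq]
  exact htend
end

section
/- Let X be a Banach space, V ⊆ X* a closed subspace that separates points of X and is norming (‖x‖ = sup { |ρ(x)| : ρ ∈ V, ‖ρ‖ ≤ 1 } for all x). Then the natural map ι : X → V* is an isometry, and X (identified with ι(X)) is reflexive relative to V—i.e. ι is surjective—if and only if the closed unit ball of X is compact in the σ(X, V)-topology. -/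
/-!
Since `V` is norming, `ι` is an isometry. The topology `σ(X, V)` is the one induced by `ι` from
the weak-* topology of `V*`, so the unit ball of `X` is `σ(X, V)`-compact iff its image under `ι`
is weak-* compact. If `ι` is onto, that image is the unit ball of `V*`, compact by
Banach–Alaoglu. Conversely, by Helly's lemma every `g ∈ V*` with `‖g‖ < 1` agrees with some
`ι x`, `‖x‖ ≤ 1`, on any finite subset of `V`; by compactness (finite intersection property) it
then lies in `ι(B_X)`, and a subspace containing the open unit ball is everything.
-/

theorem exists_forall_apply_eq_of_sum_smul_eq_zero {K M ι : Type*} [Field K] [AddCommGroup M]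
    [Module K M] [Fintype ι] (L : ι → M →ₗ[K] K) (c : ι → K)
    (h : ∀ a : ι → K, ∑ i, a i • L i = 0 → ∑ i, a i * c i = 0) :
    ∃ x, ∀ i, L i x = c i := by
  classical
  by_contra! hc
  have hc : c ∉ LinearMap.range (LinearMap.pi L) := by
    rintro ⟨x, hx⟩
    obtain ⟨i, hi⟩ := hc x
    exact hi (congrFun hx i)
  obtain ⟨φ, hφc, hφ⟩ := Submodule.exists_le_ker_of_notMem hc
  set a : ι → K := fun i => φ fun j => if i = j then 1 else 0
  have hφ_apply (v : ι → K) : φ v = ∑ i, a i * v i := by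
    simp only [φ.pi_apply_eq_sum_univ v, smul_eq_mul, mul_comm, a]
  refine hφc ((hφ_apply c).trans (h a ?_))
  ext x
  simpa [hφ_apply, LinearMap.sum_apply] using hφ ⟨x, rfl⟩

section Helly

variable {𝕜 X ι : Type*} [RCLike 𝕜] [NormedAddCommGroup X] [NormedSpace 𝕜 X] [Fintype ι]

theorem norm_mk_iInf_ker_le (ρ : ι → StrongDual 𝕜 X) (x : X) {M : ℝ} (hM0 : 0 ≤ M)
    (hM : ∀ a : ι → 𝕜, ‖∑ i, a i * ρ i x‖ ≤ M * ‖∑ i, a i • ρ i‖) :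
    ‖(Submodule.Quotient.mk x : X ⧸ ⨅ i, LinearMap.ker (ρ i : X →ₗ[𝕜] 𝕜))‖ ≤ M := by
  set N := ⨅ i, LinearMap.ker (ρ i : X →ₗ[𝕜] 𝕜)
  -- A norming functional of the quotient, pulled back to `X`, kills `N`,
  -- so it is a combination of the `ρ i`.
  obtain ⟨g, hg, hgx⟩ := exists_dual_vector'' 𝕜 (Submodule.Quotient.mk x : X ⧸ N)
  set φ := g.comp N.mkQL
  have hφN : N ≤ LinearMap.ker (φ : X →ₗ[𝕜] 𝕜) := fun y hy => by
    simp [φ, (Submodule.Quotient.mk_eq_zero N).2 hy]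
  obtain ⟨a, ha⟩ :=
    (Submodule.mem_span_range_iff_exists_fun 𝕜).1 (mem_span_of_iInf_ker_le_ker hφN)
  have hφ : ∑ i, a i • ρ i = φ := ContinuousLinearMap.coe_injective (by simpa using ha)
  have hφ1 : ‖φ‖ ≤ 1 := by
    refine φ.opNorm_le_bound zero_le_one fun y => ?_
    calc ‖φ y‖ ≤ 1 * ‖(Submodule.Quotient.mk y : X ⧸ N)‖ := g.le_of_opNorm_le hg _
      _ ≤ 1 * ‖y‖ := by gcongr; exact Submodule.Quotient.norm_mk_le N y
  calc ‖(Submodule.Quotient.mk x : X ⧸ N)‖ = ‖φ x‖ := by simp [φ, hgx]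
    _ = ‖∑ i, a i * ρ i x‖ := by simp [← hφ]
    _ ≤ M * ‖φ‖ := hφ ▸ hM a
    _ ≤ M := mul_le_of_le_one_right hM0 hφ1

/-- **Helly's lemma**. -/
theorem exists_norm_le_forall_apply_eq (ρ : ι → StrongDual 𝕜 X) (c : ι → 𝕜) {M t : ℝ}
    (hM0 : 0 ≤ M) (hM : ∀ a : ι → 𝕜, ‖∑ i, a i * c i‖ ≤ M * ‖∑ i, a i • ρ i‖) (hMt : M < t) :
    ∃ x : X, ‖x‖ ≤ t ∧ ∀ i, ρ i x = c i := by
  obtain ⟨x₀, hx₀⟩ : ∃ x₀, ∀ i, ρ i x₀ = c i :=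
    exists_forall_apply_eq_of_sum_smul_eq_zero (fun i => (ρ i : X →ₗ[𝕜] 𝕜)) c fun a ha => by
      have : ∑ i, a i • ρ i = 0 := ContinuousLinearMap.coe_injective (by simpa using ha)
      simpa [this] using hM a
  set N := ⨅ i, LinearMap.ker (ρ i : X →ₗ[𝕜] 𝕜)
  have hq : ‖(Submodule.Quotient.mk x₀ : X ⧸ N)‖ ≤ M :=
    norm_mk_iInf_ker_le ρ x₀ hM0 fun a => by simpa [hx₀] using hM a
  obtain ⟨x, hx, hxt⟩ := Submodule.Quotient.norm_mk_lt (Submodule.Quotient.mk x₀ : X ⧸ N)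
    (sub_pos.2 hMt)
  refine ⟨x, by linarith, fun i => ?_⟩
  have hxN : x - x₀ ∈ N := by
    rw [← Submodule.Quotient.mk_eq_zero, Submodule.Quotient.mk_sub, hx, sub_self]
  rw [← hx₀ i, ← sub_eq_zero]
  simpa using (Submodule.mem_iInf _).1 hxN i

end Helly

section RelativeDual

variable {𝕜 X E : Type*} [RCLike 𝕜] [NormedAddCommGroup E] [NormedSpace 𝕜 E]

theorem isCompact_induced_iff_isCompact_image_toWeakDual (f : X → StrongDual 𝕜 E) (s : Set X) :
    @IsCompact X (.induced (fun x ρ => f x ρ) Pi.topologicalSpace) s ↔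
      IsCompact ((fun x => StrongDual.toWeakDual (f x)) '' s) :=
  @Topology.IsInducing.isCompact_iff _ _ (.induced _ Pi.topologicalSpace) _ s _
    (@Topology.IsInducing.mk _ _ (.induced _ Pi.topologicalSpace) _ _ induced_compose.symm)

theorem isCompact_image_closedBall_toWeakDual_of_surjective [Norm X] {f : X → StrongDual 𝕜 E}
    (hf : ∀ x, ‖f x‖ = ‖x‖) (hsurj : Function.Surjective f) :
    IsCompact ((fun x => StrongDual.toWeakDual (f x)) '' {x | ‖x‖ ≤ 1}) := by
  convert WeakDual.isCompact_closedBall (𝕜 := 𝕜) (E := E) 0 1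
  ext g
  obtain ⟨x, hx⟩ := hsurj (WeakDual.toStrongDual g)
  constructor
  · rintro ⟨y, hy, rfl⟩
    simpa [hf] using hy
  · intro hg
    refine ⟨x, ?_, hx⟩
    simpa [← hf, hx] using hg

variable [NormedAddCommGroup X] [NormedSpace 𝕜 X]
  {j : E →ₗᵢ[𝕜] StrongDual 𝕜 X} {ι : X →ₗ[𝕜] StrongDual 𝕜 E}

theorem norm_apply_eq_of_norming (hι : ∀ x ρ, ι x ρ = j ρ x)
    (hnorming : ∀ x : X, ‖x‖ = sSup {r : ℝ | ∃ ρ : E, ‖ρ‖ ≤ 1 ∧ r = ‖j ρ x‖}) (x : X) :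
    ‖ι x‖ = ‖x‖ := by
  refine le_antisymm (ι x |>.opNorm_le_bound (norm_nonneg x) fun ρ => ?_) ?_
  · rw [hι, mul_comm, ← j.norm_map]
    exact (j ρ).le_opNorm x
  · rw [hnorming x]
    refine Real.sSup_le ?_ (norm_nonneg _)
    rintro r ⟨ρ, hρ1, rfl⟩
    rw [← hι x ρ]
    exact (ι x).le_of_opNorm_le_of_le le_rfl hρ1 |>.trans_eq (mul_one _)

theorem mem_range_of_isCompact_image_closedBall_toWeakDual (hι : ∀ x ρ, ι x ρ = j ρ x)
    (hcpt : IsCompact ((fun x => StrongDual.toWeakDual (ι x)) '' {x | ‖x‖ ≤ 1}))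
    {g : StrongDual 𝕜 E} (hg : ‖g‖ < 1) : g ∈ LinearMap.range ι := by
  have hfinite (s : Set E) [Fintype s] : ∃ x : X, ‖x‖ ≤ 1 ∧ ∀ ρ : s, j ρ x = g ρ := by
    refine exists_norm_le_forall_apply_eq (fun ρ : s => j ρ) (fun ρ => g ρ) (norm_nonneg g)
      (fun a => ?_) hg
    calc ‖∑ ρ, a ρ * g ρ‖ = ‖g (∑ ρ, a ρ • (ρ : E))‖ := by simp [map_sum]
      _ ≤ ‖g‖ * ‖∑ ρ, a ρ • (ρ : E)‖ := g.le_opNorm _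
      _ = ‖g‖ * ‖∑ ρ, a ρ • j ρ‖ := by simp only [← j.norm_map, map_sum, map_smul]
  obtain ⟨_, ⟨x, -, rfl⟩, hx⟩ := hcpt.inter_iInter_nonempty (fun ρ => {g' | g' ρ = g ρ})
    (fun ρ => isClosed_eq (WeakDual.eval_continuous ρ) continuous_const) fun s => by
      obtain ⟨x, hx1, hx⟩ := hfinite s
      refine ⟨_, ⟨x, hx1, rfl⟩, Set.mem_iInter₂.2 fun ρ hρ => ?_⟩
      simpa [hι] using hx ⟨ρ, hρ⟩
  exact ⟨x, ContinuousLinearMap.ext fun ρ => Set.mem_iInter.1 hx ρ⟩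

theorem surjective_of_isCompact_image_closedBall_toWeakDual (hι : ∀ x ρ, ι x ρ = j ρ x)
    (hcpt : IsCompact ((fun x => StrongDual.toWeakDual (ι x)) '' {x | ‖x‖ ≤ 1})) :
    Function.Surjective ι := by
  have hball : Metric.ball 0 1 ⊆ (LinearMap.range ι : Set (StrongDual 𝕜 E)) := fun g hg =>
    mem_range_of_isCompact_image_closedBall_toWeakDual hι hcpt (mem_ball_zero_iff.1 hg)
  refine LinearMap.range_eq_top.1 ((LinearMap.range ι).eq_top_of_nonempty_interior'
    ⟨0, mem_interior_iff_mem_nhds.2 ?_⟩)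
  exact Filter.mem_of_superset (Metric.ball_mem_nhds 0 one_pos) hball

theorem norm_apply_eq_and_surjective_iff_isCompact_closedBall (hι : ∀ x ρ, ι x ρ = j ρ x)
    (hnorming : ∀ x : X, ‖x‖ = sSup {r : ℝ | ∃ ρ : E, ‖ρ‖ ≤ 1 ∧ r = ‖j ρ x‖}) :
    (∀ x, ‖ι x‖ = ‖x‖) ∧ (Function.Surjective ι ↔
      @IsCompact X (.induced (fun x ρ => ι x ρ) Pi.topologicalSpace) {x | ‖x‖ ≤ 1}) := by
  have hiso := norm_apply_eq_of_norming hι hnorming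
  refine ⟨hiso, ?_⟩
  rw [isCompact_induced_iff_isCompact_image_toWeakDual]
  exact ⟨isCompact_image_closedBall_toWeakDual_of_surjective hiso,
    surjective_of_isCompact_image_closedBall_toWeakDual hι⟩

end RelativeDual

theorem stmt_16_general {X : Type*} [NormedAddCommGroup X] [NormedSpace ℂ X]
    (V : Submodule ℂ (X →L[ℂ] ℂ))
    (hnorming : ∀ x : X, ‖x‖ = sSup {r : ℝ | ∃ ρ ∈ V, ‖ρ‖ ≤ 1 ∧ r = ‖ρ x‖})
    (ι : X →ₗ[ℂ] StrongDual ℂ ↥V)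
    (hι : ∀ (x : X) (ρ : ↥V), ι x ρ = (ρ : X →L[ℂ] ℂ) x) :
    (∀ x, @norm (StrongDual ℂ ↥V) (@ContinuousLinearMap.hasOpNorm ℂ ℂ ↥V ℂ _ _ _ _ _ _ (RingHom.id ℂ)) (ι x) = ‖x‖) ∧
      (Function.Surjective ι ↔
        @IsCompact X
          (TopologicalSpace.induced (fun (x : X) (ρ : ↥V) => (ρ : X →L[ℂ] ℂ) x)
            Pi.topologicalSpace)
          {x : X | ‖x‖ ≤ 1}) := by
  have hnorming' (x : X) :
      ‖x‖ = sSup {r : ℝ | ∃ ρ : V, ‖ρ‖ ≤ 1 ∧ r = ‖(ρ : X →L[ℂ] ℂ) x‖} := by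
    simpa only [Subtype.exists, Submodule.coe_norm, exists_prop] using hnorming x
  -- `StrongDual ℂ V` carries the subspace topology of `V`, which is only defeq to the norm
  -- topology; the explicit instance holes let the unifier see through this.
  have h := @norm_apply_eq_and_surjective_iff_isCompact_closedBall ℂ X V _ _ _ _ _ V.subtypeₗᵢ ι
    hι hnorming'
  rwa [show (fun x (ρ : V) => (ρ : X →L[ℂ] ℂ) x) = fun x ρ => ι x ρ from
    funext₂ fun x ρ => (hι x ρ).symm]

/-- Let `X` be a Banach space and `V ⊆ X*` a closed subspace which separates
points and is norming.  Then the natural map `ι : X → V*`, `ι(x)(ρ) = ρ(x)`, is an isometry,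
and `ι` is surjective (`X` is reflexive relative to `V`) if and only if the closed unit ball
of `X` is compact in the weak topology `σ(X,V)` induced by `V`. -/
theorem stmt_16 {X : Type*} [NormedAddCommGroup X] [NormedSpace ℂ X] [CompleteSpace X]
    (V : Submodule ℂ (X →L[ℂ] ℂ)) (hVclosed : IsClosed (V : Set (X →L[ℂ] ℂ)))
    (hsep : ∀ x : X, (∀ ρ ∈ V, ρ x = 0) → x = 0)
    (hnorming : ∀ x : X, ‖x‖ = sSup {r : ℝ | ∃ ρ ∈ V, ‖ρ‖ ≤ 1 ∧ r = ‖ρ x‖})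
    (ι : X →ₗ[ℂ] StrongDual ℂ ↥V)
    (hι : ∀ (x : X) (ρ : ↥V), ι x ρ = (ρ : X →L[ℂ] ℂ) x) :
    (∀ x, @norm (StrongDual ℂ ↥V) (@ContinuousLinearMap.hasOpNorm ℂ ℂ ↥V ℂ _ _ _ _ _ _ (RingHom.id ℂ)) (ι x) = ‖x‖) ∧
      (Function.Surjective ι ↔
        @IsCompact X
          (TopologicalSpace.induced (fun (x : X) (ρ : ↥V) => (ρ : X →L[ℂ] ℂ) x)
            Pi.topologicalSpace)
          {x : X | ‖x‖ ≤ 1}) :=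
  stmt_16_general V hnorming ι hι
end
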